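/- arXiv:2505.00481 — 4 statements merged into one kernel-verified Lean document; each statement's English description precedes it below -/
import Mathlib

section
/- Let D(z) and N(z) be coprime real polynomials with n = deg(D) ≥ 1 and deg(N) < n. For any real polynomial γ(z) of degree 2n, there exist polynomials D_c(z) and N_c(z) such that D_c(z)·D(z) + N_c(z)·N(z) = γ(z), deg(N_c) < n, and deg(D_c) = n. -/
open Polynomial

/-! Dividing `γ` times a Bézout coefficient by `D` gives a solution of `Dc D + Nc N = γ` with
`deg Nc < n`. Then `deg (Nc N) < 2n = deg γ`, so `Dc D` carries the leading term of `γ` and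
`deg Dc = 2n - n = n`. -/

namespace Polynomial

theorem degree_mul_lt_of_degree_lt {R : Type*} [Semiring R] {p q : R[X]} {m n : ℕ}
    (hp : p.degree < m) (hq : q.degree < n) : (p * q).degree < m + n :=
  calc (p * q).degree ≤ p.degree + q.degree := degree_mul_le p q
    _ ≤ p.degree + n := by gcongr
    _ < m + n := WithBot.add_lt_add_right WithBot.coe_ne_bot hp

theorem degree_add_degree_eq_of_mul_add_mul_eq {R : Type*} [Ring R] [NoZeroDivisors R]
    {a p b q r : R[X]} (h : a * p + b * q = r) (hlt : (b * q).degree < r.degree) :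
    a.degree + p.degree = r.degree := by
  rw [← degree_mul, eq_sub_of_add_eq h, degree_sub_eq_left_of_degree_lt hlt]

end Polynomial

theorem IsCoprime.exists_mul_add_mul_eq_of_degree_lt {K : Type*} [Field K] {p q : K[X]}
    (h : IsCoprime p q) (hp : p ≠ 0) (r : K[X]) :
    ∃ a b : K[X], a * p + b * q = r ∧ b.degree < p.degree := by
  obtain ⟨u, v, huv⟩ := h
  refine ⟨r * u + r * v / p * q, r * v % p, ?_, EuclideanDomain.mod_lt _ hp⟩
  linear_combination q * EuclideanDomain.div_add_mod (r * v) p + r * huv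

theorem pole_placement_general (D N γ : ℝ[X]) (n : ℕ) (hco : IsCoprime D N)
    (hD : D.degree = n) (hN : N.degree < n) (hγ : γ.degree = 2 * n) :
    ∃ Dc Nc : ℝ[X],
      Dc * D + Nc * N = γ ∧ Nc.degree < n ∧ Dc.degree = n := by
  obtain ⟨Dc, Nc, hsum, hNc⟩ :=
    hco.exists_mul_add_mul_eq_of_degree_lt (ne_zero_of_coe_le_degree hD.ge) γ
  rw [hD] at hNc
  refine ⟨Dc, Nc, hsum, hNc, ?_⟩
  have hdeg := degree_add_degree_eq_of_mul_add_mul_eq hsum <| by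
    rw [hγ, two_mul]; exact degree_mul_lt_of_degree_lt hNc hN
  rw [hD, hγ, two_mul] at hdeg
  exact WithBot.add_right_cancel WithBot.coe_ne_bot hdeg

theorem pole_placement (D N γ : ℝ[X]) (n : ℕ) (hco : IsCoprime D N)
    (hn : 1 ≤ n) (hD : D.degree = n) (hN : N.degree < n) (hγ : γ.degree = 2 * n) :
    ∃ Dc Nc : ℝ[X],
      Dc * D + Nc * N = γ ∧ Nc.degree < n ∧ Dc.degree = n :=
  pole_placement_general D N γ n hco hD hN hγ
end

section
/- Let N_p(z) be a real polynomial with N_p(0) ≠ 0 and deg(N_p) ≤ n. For x ∈ ℝⁿ, let p_x(z) = zⁿ + x_{n-1}z^{n-1} + ... + x_0, and define Δ(x) = Δ₁(x) − P₁P₂⁻¹Δ₂(x), where [Δ₁(x); Δ₂(x)] = T_n(p_x) and [P₁; P₂] = T_n(N_p) are the 2n×n banded Toeplitz coefficient matrices split into top and bottom n×n blocks. Then Δ(x) is invertible if and only if p_x(z) and N_p(z) are coprime. -/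
open Polynomial

/-- The monic degree-`n` polynomial with coefficient vector `x`. -/
noncomputable def pX {n : ℕ} (x : Fin n → ℝ) : ℝ[X] :=
  X ^ n + ∑ i : Fin n, C (x i) * X ^ (i : ℕ)

/-- The `2n × n` banded Toeplitz matrix of the coefficients of `a`:
entry `(i, j)` equals `a_{n + j - i}` (zero when `i > n + j`). -/
noncomputable def Tmat (n : ℕ) (a : ℝ[X]) : Matrix (Fin (2 * n)) (Fin n) ℝ :=
  fun i j => if (i : ℕ) ≤ n + j then a.coeff (n + j - i) else 0

/-- Top `n × n` block. -/
noncomputable def topBlock (n : ℕ) (a : ℝ[X]) : Matrix (Fin n) (Fin n) ℝ :=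
  fun i j => Tmat n a ⟨i.1, by omega⟩ j

/-- Bottom `n × n` block. -/
noncomputable def botBlock (n : ℕ) (a : ℝ[X]) : Matrix (Fin n) (Fin n) ℝ :=
  fun i j => Tmat n a ⟨n + i.1, by omega⟩ j

/-!
Reversing the order of the rows, and of the columns inside each block, turns the block matrix
`[Δ₁ P₁; Δ₂ P₂] = [T_n(p_x) T_n(N_p)]` into the Sylvester matrix of `N_p` and `p_x` (this uses
`deg N_p ≤ n`). Since `P₂` is invertible, the block matrix is invertible iff its Schur complement
`Δ` is, and the determinant of the Sylvester matrix is, up to sign, the resultant of the monic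
polynomial `p_x` and `N_p`, which is nonzero exactly when they are coprime.
-/

open Matrix

lemma det_botBlock (n : ℕ) (a : ℝ[X]) : (botBlock n a).det = a.coeff 0 ^ n := by
  have hupper : (botBlock n a).IsUpperTriangular := fun i j hji => by
    simp only [botBlock, Tmat]
    exact if_neg (by simp only [id] at hji; omega)
  rw [det_of_isUpperTriangular hupper]
  simp [botBlock, Tmat]

lemma Polynomial.Monic.resultant_eq_of_natDegree_le {R : Type*} [CommRing R] {f g : R[X]}
    (hf : f.Monic) {m n : ℕ} (hm : f.natDegree = m) (hg : g.natDegree ≤ n) :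
    resultant f g m n = resultant f g := by
  obtain ⟨k, rfl⟩ := Nat.exists_eq_add_of_le hg
  rw [← hm, resultant_add_right_deg _ _ _ _ _ le_rfl, hf.coeff_natDegree, one_pow, one_mul]

lemma monic_pX {n : ℕ} (x : Fin n → ℝ) : (pX x).Monic :=
  monic_X_pow_add (degree_sum_fin_lt x)

lemma natDegree_pX {n : ℕ} (x : Fin n → ℝ) : (pX x).natDegree = n := by
  rw [pX, natDegree_add_eq_left_of_degree_lt (by rw [degree_X_pow]; exact degree_sum_fin_lt x),
    natDegree_X_pow]

lemma fromBlocks_eq_submatrix_sylvester {n : ℕ} {p q : ℝ[X]} (hp : p.natDegree ≤ n)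
    (hq : q.natDegree ≤ n) :
    fromBlocks (topBlock n p) (topBlock n q) (botBlock n p) (botBlock n q) =
      (sylvester q p n n).submatrix (finSumFinEquiv.trans Fin.revPerm)
        ((Equiv.sumCongr Fin.revPerm Fin.revPerm).trans finSumFinEquiv) := by
  ext (i | i) (j | j) <;>
  simp [sylvester, topBlock, botBlock, Tmat, -Fin.natAdd_eq_addNat] <;>
  split_ifs <;>
  first
  | rfl
  | (congr 1; omega)
  | exact coeff_eq_zero_of_natDegree_lt (by omega)

theorem Delta_invertible_iff_coprime (n : ℕ) (Np : ℝ[X])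
    (hdeg : Np.degree ≤ n) (h0 : Np.eval 0 ≠ 0) (x : Fin n → ℝ) :
    IsUnit (topBlock n (pX x) - topBlock n Np * (botBlock n Np)⁻¹ * botBlock n (pX x)) ↔
      IsCoprime (pX x) Np := by
  have hP₂ : IsUnit (botBlock n Np).det := by
    rw [det_botBlock, coeff_zero_eq_eval_zero]
    exact (pow_ne_zero n h0).isUnit
  let _ := (botBlock n Np).invertibleOfIsUnitDet hP₂
  have hNp : Np.natDegree ≤ n := natDegree_le_of_degree_le hdeg
  rw [← invOf_eq_nonsing_inv, ← isUnit_fromBlocks_iff_of_invertible₂₂,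
    fromBlocks_eq_submatrix_sylvester (natDegree_pX x).le hNp, isUnit_submatrix_equiv,
    isUnit_iff_isUnit_det, ← resultant, resultant_comm, IsUnit.mul_iff,
    (monic_pX x).resultant_eq_of_natDegree_le (natDegree_pX x) hNp,
    isUnit_resultant_iff_isCoprime (monic_pX x)]
  exact and_iff_right (isUnit_neg_one.pow _)
end

section
/- Let φ₁, ..., φ_m ∈ ℝⁿ and ψ₁, ..., ψ_m ∈ ℝ, and suppose there exists v ∈ ℝⁿ with φ_tᵀv = ψ_t for all t ∈ I, where I ⊆ {1,...,m}. Let x₀ ∈ ℝⁿ be such that φ_tᵀx₀ − ψ_t ≠ 0 for all t ∈ I, and let Φ = {x ∈ ℝⁿ : (φ_tᵀx₀ − ψ_t)(φ_tᵀx − ψ_t) > 0 for all t ∈ I}. Then Φ contains an open infinity-norm ball of radius 1, and consequently contains an integer point x* ∈ ℤⁿ. -/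
/-!
Translating by the common point `v` turns `Φ` into the set of `z` with `ℓₜ z₀ * ℓₜ z > 0`
for the linear forms `ℓₜ = φₜᵀ` and `z₀ = x₀ - v`. This set is open, contains `z₀` and is
a cone, so with a small ball around `z₀` it contains all its dilates: balls of any radius.
A sup-norm ball of radius `1` contains the componentwise floor of its centre.
-/

open Metric Pointwise

theorem exists_ball_subset_of_isOpen_of_smul_mem {E : Type*} [NormedAddCommGroup E]
    [NormedSpace ℝ E] {S : Set E} (hS : IsOpen S) (hsmul : ∀ a : ℝ, 0 < a → ∀ x ∈ S, a • x ∈ S)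
    {z : E} (hz : z ∈ S) {r : ℝ} (hr : 0 < r) : ∃ c, ball c r ⊆ S := by
  obtain ⟨δ, hδ, hball⟩ := Metric.isOpen_iff.mp hS z hz
  have ha : 0 < r / δ := div_pos hr hδ
  refine ⟨(r / δ) • z, ?_⟩
  calc ball ((r / δ) • z) r = (r / δ) • ball z δ := by
        rw [_root_.smul_ball ha.ne', Real.norm_of_nonneg ha.le, div_mul_cancel₀ r hδ.ne']
    _ ⊆ S := by
        rintro _ ⟨x, hx, rfl⟩
        exact hsmul _ ha x (hball hx)

section SameSignCone

variable {ι E : Type*} [NormedAddCommGroup E] [NormedSpace ℝ E]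

def sameSignCone (ℓ : ι → E →L[ℝ] ℝ) (I : Finset ι) (z₀ : E) : Set E :=
  {z | ∀ t ∈ I, 0 < ℓ t z₀ * ℓ t z}

variable (ℓ : ι → E →L[ℝ] ℝ) (I : Finset ι) (z₀ : E)

theorem isOpen_sameSignCone : IsOpen (sameSignCone ℓ I z₀) := by
  simp only [sameSignCone, Set.ofPred_forall]
  exact isOpen_biInter_finset fun t _ => isOpen_lt continuous_const (by fun_prop)

theorem smul_mem_sameSignCone {a : ℝ} (ha : 0 < a) {z : E} (hz : z ∈ sameSignCone ℓ I z₀) :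
    a • z ∈ sameSignCone ℓ I z₀ := fun t ht => by
  rw [map_smul, smul_eq_mul, mul_left_comm]
  exact mul_pos ha (hz t ht)

theorem self_mem_sameSignCone (h : ∀ t ∈ I, ℓ t z₀ ≠ 0) : z₀ ∈ sameSignCone ℓ I z₀ :=
  fun t ht => mul_self_pos.mpr (h t ht)

theorem exists_ball_subset_sameSignCone (h : ∀ t ∈ I, ℓ t z₀ ≠ 0) {r : ℝ} (hr : 0 < r) :
    ∃ c, ball c r ⊆ sameSignCone ℓ I z₀ :=
  exists_ball_subset_of_isOpen_of_smul_mem (isOpen_sameSignCone ℓ I z₀)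
    (fun _ ha _ => smul_mem_sameSignCone ℓ I z₀ ha) (self_mem_sameSignCone ℓ I z₀ h) hr

end SameSignCone

theorem dist_floor_pi_lt_one {ι : Type*} [Fintype ι] (c : ι → ℝ) :
    dist (fun i => (⌊c i⌋ : ℝ)) c < 1 := by
  refine (dist_pi_lt_iff one_pos).mpr fun i => ?_
  rw [dist_comm, Real.dist_eq, Int.self_sub_floor, abs_of_nonneg (Int.fract_nonneg _)]
  exact Int.fract_lt_one _

theorem Phi_contains_ball_and_integer_point (n m : ℕ)
    (φ : Fin m → (Fin n → ℝ)) (ψ : Fin m → ℝ) (I : Finset (Fin m))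
    (v : Fin n → ℝ) (hv : ∀ t ∈ I, ∑ i, φ t i * v i = ψ t)
    (x₀ : Fin n → ℝ) (hx₀ : ∀ t ∈ I, ∑ i, φ t i * x₀ i - ψ t ≠ 0) :
    (∃ c : Fin n → ℝ,
      ∀ y : Fin n → ℝ, (∀ i, |y i - c i| < 1) →
        ∀ t ∈ I, (∑ i, φ t i * x₀ i - ψ t) * (∑ i, φ t i * y i - ψ t) > 0) ∧
    (∃ xs : Fin n → ℤ,
      ∀ t ∈ I, (∑ i, φ t i * x₀ i - ψ t) * (∑ i, φ t i * (xs i : ℝ) - ψ t) > 0) := by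
  let ℓ : Fin m → (Fin n → ℝ) →L[ℝ] ℝ :=
    fun t => LinearMap.toContinuousLinearMap (dotProductBilin ℝ ℝ (φ t))
  have hℓ : ∀ t ∈ I, ∀ y, ∑ i, φ t i * y i - ψ t = ℓ t (y - v) := by
    intro t ht y
    simp [ℓ, dotProduct, mul_sub, ← hv t ht]
  obtain ⟨c, hc⟩ := exists_ball_subset_sameSignCone ℓ I (x₀ - v)
    (fun t ht => hℓ t ht x₀ ▸ hx₀ t ht) one_pos
  have hΦ : ∀ y ∈ ball (c + v) 1, ∀ t ∈ I,
      (∑ i, φ t i * x₀ i - ψ t) * (∑ i, φ t i * y i - ψ t) > 0 := by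
    intro y hy t ht
    rw [hℓ t ht, hℓ t ht]
    refine hc ?_ t ht
    rwa [mem_ball, dist_sub_eq_dist_add_left]
  refine ⟨⟨c + v, fun y hy => hΦ y ?_⟩, ⟨fun i => ⌊(c + v) i⌋, hΦ _ (dist_floor_pi_lt_one _)⟩⟩
  simpa [mem_ball, dist_pi_lt_iff one_pos, Real.dist_eq] using hy
end

section
/- Consider the discrete-time system x_{k+1} = x_k + Δ(x_k)u_k on ℝⁿ, where for each x in a compact set Ω the matrix Δ(x) ∈ ℝ^{n×n} is invertible and x ↦ Δ(x)⁻¹ is continuous. Let Ω be the line segment from x₀ to x*, σ = max_{x∈Ω} ‖Δ(x)⁻¹‖₁, and fix μ ∈ (0,1). Define the feedback u_k = Δ(x_k)⁻¹(x* − x_k) if ‖Δ(x_k)⁻¹(x* − x_k)‖₁ < 1, and u_k = μ·Δ(x_k)⁻¹(x* − x_k)/‖Δ(x_k)⁻¹(x* − x_k)‖₁ otherwise. Then x_k ∈ Ω for all k, ‖u_k‖₁ < 1 for all k, and x_T = x* for some T ≤ ⌈(σ/μ)·‖x* − x₀‖₁⌉. -/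
/-!
Whenever the feedback does not reach `xs` in one step, it moves the state a fraction
`θ = μ / ‖Δ(x)⁻¹ (xs - x)‖₁` of the way towards `xs`. Since
`‖Δ(x)⁻¹ (xs - x)‖₁ ≤ σ ‖xs - x‖₁` along the segment, each such step shortens the 1-norm
distance to `xs` by at least `μ / σ`, so the distance `‖xs - x₀‖₁` is used up after at most
`⌈(σ / μ) ‖xs - x₀‖₁⌉` steps. All states stay on the segment because every step is a convex
combination of the current state and `xs`.
-/

open Matrix Set

noncomputable def vnorm {n : ℕ} (v : Fin n → ℝ) : ℝ := ∑ i, |v i|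

noncomputable def feedback {n : ℕ} (Δ : (Fin n → ℝ) → Matrix (Fin n) (Fin n) ℝ)
    (xs : Fin n → ℝ) (μ : ℝ) (x : Fin n → ℝ) : Fin n → ℝ :=
  if vnorm ((Δ x)⁻¹.mulVec (xs - x)) < 1 then (Δ x)⁻¹.mulVec (xs - x)
  else (μ / vnorm ((Δ x)⁻¹.mulVec (xs - x))) • (Δ x)⁻¹.mulVec (xs - x)

section VNorm

variable {n : ℕ}

lemma vnorm_nonneg (v : Fin n → ℝ) : 0 ≤ vnorm v :=
  Finset.sum_nonneg fun _ _ => abs_nonneg _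

lemma vnorm_smul (c : ℝ) (v : Fin n → ℝ) : vnorm (c • v) = |c| * vnorm v := by
  simp [vnorm, abs_mul, Finset.mul_sum]

lemma vnorm_eq_zero_iff {v : Fin n → ℝ} : vnorm v = 0 ↔ v = 0 := by
  simp [vnorm, Finset.sum_eq_zero_iff_of_nonneg, funext_iff]

lemma vnorm_pos {v : Fin n → ℝ} (h : v ≠ 0) : 0 < vnorm v :=
  (vnorm_nonneg v).lt_of_ne' (vnorm_eq_zero_iff.not.mpr h)

/-- The matrix norm induced by `vnorm`. -/
noncomputable def colSumNorm (A : Matrix (Fin n) (Fin n) ℝ) : ℝ := ⨆ j, ∑ i, |A i j|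

lemma colSum_le_colSumNorm (A : Matrix (Fin n) (Fin n) ℝ) (j : Fin n) :
    ∑ i, |A i j| ≤ colSumNorm A :=
  le_ciSup (f := fun j => ∑ i, |A i j|) (finite_range _).bddAbove j

lemma vnorm_mulVec_le (A : Matrix (Fin n) (Fin n) ℝ) (w : Fin n → ℝ) :
    vnorm (A *ᵥ w) ≤ colSumNorm A * vnorm w := by
  calc vnorm (A *ᵥ w) = ∑ i, |∑ j, A i j * w j| := rfl
    _ ≤ ∑ i, ∑ j, |A i j * w j| :=
        Finset.sum_le_sum fun i _ => Finset.abs_sum_le_sum_abs _ _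
    _ = ∑ j, (∑ i, |A i j|) * |w j| := by
        rw [Finset.sum_comm]; simp only [abs_mul, Finset.sum_mul]
    _ ≤ ∑ j, colSumNorm A * |w j| :=
        Finset.sum_le_sum fun j _ =>
          mul_le_mul_of_nonneg_right (colSum_le_colSumNorm A j) (abs_nonneg _)
    _ = colSumNorm A * vnorm w := by rw [vnorm, Finset.mul_sum]

lemma colSumNorm_pos_of_mulVec_ne_zero {A : Matrix (Fin n) (Fin n) ℝ} {w : Fin n → ℝ}
    (h : A *ᵥ w ≠ 0) : 0 < colSumNorm A := by
  have hAw := (vnorm_pos h).trans_le (vnorm_mulVec_le A w)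
  exact pos_of_mul_pos_left hAw (vnorm_nonneg w)

lemma mulVec_nonsing_inv_mulVec {A : Matrix (Fin n) (Fin n) ℝ} (h : IsUnit A.det)
    (w : Fin n → ℝ) : A *ᵥ (A⁻¹ *ᵥ w) = w := by
  rw [mulVec_mulVec, mul_nonsing_inv _ h, one_mulVec]

lemma colSumNorm_nonsing_inv_pos {A : Matrix (Fin n) (Fin n) ℝ} (hA : IsUnit A.det)
    {w : Fin n → ℝ} (hw : w ≠ 0) : 0 < colSumNorm A⁻¹ :=
  colSumNorm_pos_of_mulVec_ne_zero (w := w) fun h =>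
    hw (by simpa [h] using (mulVec_nonsing_inv_mulVec hA w).symm)

lemma vnorm_sub_add_smul_sub {a b : Fin n → ℝ} {θ : ℝ} (hθ : θ ≤ 1) :
    vnorm (b - (a + θ • (b - a))) = (1 - θ) * vnorm (b - a) := by
  rw [show b - (a + θ • (b - a)) = (1 - θ) • (b - a) by module, vnorm_smul,
    abs_of_nonneg (sub_nonneg.mpr hθ)]

end VNorm

section Feedback

variable {n : ℕ} (Δ : (Fin n → ℝ) → Matrix (Fin n) (Fin n) ℝ) (xs : Fin n → ℝ) (μ : ℝ)
  (x : Fin n → ℝ)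

/-- The fraction of the way to `xs` covered by the step that the feedback produces at `x`. -/
noncomputable def feedbackGain : ℝ :=
  if vnorm ((Δ x)⁻¹ *ᵥ (xs - x)) < 1 then 1 else μ / vnorm ((Δ x)⁻¹ *ᵥ (xs - x))

lemma feedback_eq_feedbackGain_smul :
    feedback Δ xs μ x = feedbackGain Δ xs μ x • (Δ x)⁻¹ *ᵥ (xs - x) := by
  unfold feedback feedbackGain
  split_ifs <;> simp

lemma mulVec_feedback (h : IsUnit (Δ x).det) :
    Δ x *ᵥ feedback Δ xs μ x = feedbackGain Δ xs μ x • (xs - x) := by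
  rw [feedback_eq_feedbackGain_smul, mulVec_smul, mulVec_nonsing_inv_mulVec h]

variable {Δ xs μ}

lemma feedbackGain_pos (hμ : 0 < μ) : 0 < feedbackGain Δ xs μ x := by
  unfold feedbackGain
  split_ifs with h
  · exact one_pos
  · exact div_pos hμ (one_pos.trans_le (not_lt.mp h))

lemma feedbackGain_le_one (hμ : μ ≤ 1) : feedbackGain Δ xs μ x ≤ 1 := by
  unfold feedbackGain
  split_ifs with h
  · exact le_rfl
  · rw [div_le_one (one_pos.trans_le (not_lt.mp h))]
    linarith [not_lt.mp h]

lemma vnorm_feedback_lt_one (hμ : μ ∈ Ioo (0 : ℝ) 1) : vnorm (feedback Δ xs μ x) < 1 := by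
  unfold feedback
  split_ifs with h
  · exact h
  · have hv : 0 < vnorm ((Δ x)⁻¹ *ᵥ (xs - x)) := one_pos.trans_le (not_lt.mp h)
    rw [vnorm_smul, abs_of_pos (div_pos hμ.1 hv), div_mul_cancel₀ _ hv.ne']
    exact hμ.2

/-- Unless the feedback reaches `xs` at once, its step has length at least `μ / σ`. -/
lemma feedbackGain_eq_one_or {σ : ℝ} (hμ : 0 ≤ μ) (hσ : colSumNorm (Δ x)⁻¹ ≤ σ) :
    feedbackGain Δ xs μ x = 1 ∨ μ ≤ σ * (feedbackGain Δ xs μ x * vnorm (xs - x)) := by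
  unfold feedbackGain
  split_ifs with h
  · exact Or.inl rfl
  · right
    have hv : 0 < vnorm ((Δ x)⁻¹ *ᵥ (xs - x)) := one_pos.trans_le (not_lt.mp h)
    have hbound : vnorm ((Δ x)⁻¹ *ᵥ (xs - x)) ≤ σ * vnorm (xs - x) :=
      (vnorm_mulVec_le _ _).trans (mul_le_mul_of_nonneg_right hσ (vnorm_nonneg _))
    calc μ = μ / vnorm ((Δ x)⁻¹ *ᵥ (xs - x)) * vnorm ((Δ x)⁻¹ *ᵥ (xs - x)) :=
          (div_mul_cancel₀ μ hv.ne').symm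
      _ ≤ μ / vnorm ((Δ x)⁻¹ *ᵥ (xs - x)) * (σ * vnorm (xs - x)) :=
          mul_le_mul_of_nonneg_left hbound (div_nonneg hμ hv.le)
      _ = σ * (μ / vnorm ((Δ x)⁻¹ *ᵥ (xs - x)) * vnorm (xs - x)) := by ring

end Feedback

lemma mem_segment_of_step {E : Type*} [AddCommGroup E] [Module ℝ E] {a b : E} {x : ℕ → E}
    (h0 : x 0 = a)
    (hstep : ∀ k, x k ∈ segment ℝ a b → ∃ θ ∈ Icc (0 : ℝ) 1, x (k + 1) = x k + θ • (b - x k))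
    (k : ℕ) : x k ∈ segment ℝ a b := by
  induction k with
  | zero => exact h0 ▸ left_mem_segment ℝ a b
  | succ k ih =>
    obtain ⟨θ, hθ, hx⟩ := hstep k ih
    exact hx ▸ (convex_segment a b).add_smul_sub_mem ih (right_mem_segment ℝ a b) hθ

lemma exists_eq_zero_le_ceil {d : ℕ → ℝ} {μ σ : ℝ} (hμ : 0 < μ) (hσ : 0 < σ)
    (hd : ∀ k, 0 ≤ d k) (hstep : ∀ k, d (k + 1) = 0 ∨ μ ≤ σ * (d k - d (k + 1))) :
    ∃ T ≤ ⌈σ / μ * d 0⌉₊, d T = 0 := by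
  set N := ⌈σ / μ * d 0⌉₊
  by_contra! hne
  have hpos : ∀ k ≤ N, 0 < d k := fun k hk => (hd k).lt_of_ne' (hne k hk)
  have hdrop : ∀ k ≤ N, k * μ ≤ σ * (d 0 - d k) := by
    intro k
    induction k with
    | zero => intro; simp
    | succ k ih =>
      intro hk
      rcases hstep k with hzero | hμk
      · exact absurd hzero (hne _ hk)
      · push_cast
        linarith [ih (Nat.le_of_succ_le hk)]
  have hceil : σ * d 0 ≤ N * μ := by
    rw [← div_le_iff₀ hμ, mul_div_right_comm]
    exact Nat.le_ceil _
  nlinarith [hdrop N le_rfl, hpos N le_rfl]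

theorem finite_time_reaching_general (n : ℕ)
    (Δ : (Fin n → ℝ) → Matrix (Fin n) (Fin n) ℝ)
    (x₀ xs : Fin n → ℝ)
    (hinv : ∀ x ∈ segment ℝ x₀ xs, IsUnit (Δ x).det)
    (σ : ℝ)
    (hσ : IsGreatest {s : ℝ | ∃ x ∈ segment ℝ x₀ xs, s = ⨆ j, ∑ i, |(Δ x)⁻¹ i j|} σ)
    (μ : ℝ) (hμ : μ ∈ Set.Ioo (0 : ℝ) 1)
    (x : ℕ → Fin n → ℝ) (hx0 : x 0 = x₀)
    (hrec : ∀ k, x (k + 1) = x k + (Δ (x k)).mulVec (feedback Δ xs μ (x k))) :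
    (∀ k, x k ∈ segment ℝ x₀ xs) ∧
    (∀ k, vnorm (feedback Δ xs μ (x k)) < 1) ∧
    ∃ T ≤ ⌈σ / μ * vnorm (xs - x₀)⌉₊, x T = xs := by
  set θ := fun k => feedbackGain Δ xs μ (x k)
  have hstep : ∀ k, x k ∈ segment ℝ x₀ xs → x (k + 1) = x k + θ k • (xs - x k) := fun k hk => by
    rw [hrec, mulVec_feedback _ _ _ _ (hinv _ hk)]
  have hθ : ∀ k, θ k ∈ Icc (0 : ℝ) 1 := fun k =>
    ⟨(feedbackGain_pos _ hμ.1).le, feedbackGain_le_one _ hμ.2.le⟩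
  have hseg := mem_segment_of_step hx0 fun k hk => ⟨θ k, hθ k, hstep k hk⟩
  refine ⟨hseg, fun k => vnorm_feedback_lt_one _ hμ, ?_⟩
  by_cases hx₀ : x₀ = xs
  · exact ⟨0, Nat.zero_le _, hx0.trans hx₀⟩
  have hσpos : 0 < σ :=
    (colSumNorm_nonsing_inv_pos (hinv x₀ (left_mem_segment ℝ x₀ xs))
      (sub_ne_zero.mpr (Ne.symm hx₀))).trans_le (hσ.2 ⟨x₀, left_mem_segment ℝ x₀ xs, rfl⟩)
  have hdist : ∀ k, vnorm (xs - x (k + 1)) = 0 ∨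
      μ ≤ σ * (vnorm (xs - x k) - vnorm (xs - x (k + 1))) := fun k => by
    rw [hstep k (hseg k), vnorm_sub_add_smul_sub (hθ k).2]
    rcases feedbackGain_eq_one_or (xs := xs) (x k) hμ.1.le (hσ.2 ⟨x k, hseg k, rfl⟩) with h | h
    · exact Or.inl (by simp [θ, h])
    · exact Or.inr (by simpa [θ, sub_mul] using h)
  obtain ⟨T, hT, hdT⟩ := exists_eq_zero_le_ceil (d := fun k => vnorm (xs - x k)) hμ.1 hσpos
    (fun k => vnorm_nonneg _) hdist
  exact ⟨T, hx0 ▸ hT, (sub_eq_zero.mp (vnorm_eq_zero_iff.mp hdT)).symm⟩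

theorem finite_time_reaching (n : ℕ)
    (Δ : (Fin n → ℝ) → Matrix (Fin n) (Fin n) ℝ)
    (x₀ xs : Fin n → ℝ)
    (hinv : ∀ x ∈ segment ℝ x₀ xs, IsUnit (Δ x).det)
    (hcont : ContinuousOn (fun x => (Δ x)⁻¹) (segment ℝ x₀ xs))
    (σ : ℝ)
    (hσ : IsGreatest {s : ℝ | ∃ x ∈ segment ℝ x₀ xs, s = ⨆ j, ∑ i, |(Δ x)⁻¹ i j|} σ)
    (μ : ℝ) (hμ : μ ∈ Set.Ioo (0 : ℝ) 1)
    (x : ℕ → Fin n → ℝ) (hx0 : x 0 = x₀)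
    (hrec : ∀ k, x (k + 1) = x k + (Δ (x k)).mulVec (feedback Δ xs μ (x k))) :
    (∀ k, x k ∈ segment ℝ x₀ xs) ∧
    (∀ k, vnorm (feedback Δ xs μ (x k)) < 1) ∧
    ∃ T ≤ ⌈σ / μ * vnorm (xs - x₀)⌉₊, x T = xs :=
  finite_time_reaching_general n Δ x₀ xs hinv σ hσ μ hμ x hx0 hrec
end
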